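/- arXiv:1505.02032 — 4 statements merged into one kernel-verified Lean document; each statement's English description precedes it below -/
import Mathlib

section
/- Let g, k > 0, σ = 0, ε ∈ (0,1], U₀ ≥ 0, μ ∈ ℝ. The quadratic equation g(1-ε) = ε(U₀-c)²k + εμ(U₀-c) + c²k in c has a non-real root if and only if (ε/(1+ε)²)·U₀(U₀ + μ/k) > (ε²/(1+ε)²)·μ²/(4k²) + (g/k)·(1-ε)/(1+ε). -/
/-!
Writing the dispersion relation as `A c² + B c + C = 0` with real coefficients and
`A = k (1 + ε) > 0`, a non-real root exists exactly when the discriminant is negative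
(the imaginary part of the equation forces `Re c = -B / 2A`, and then the real part reads
`(2A Im c)² = -discrim A B C`). The criterion is this discriminant condition divided by
`(2k(1 + ε))²`.
-/

open Complex

theorem quadratic_eq_zero_iff_of_im_ne_zero {a b c : ℝ} (ha : a ≠ 0) {z : ℂ}
    (hz : z.im ≠ 0) :
    (a : ℂ) * z ^ 2 + b * z + c = 0 ↔
      2 * a * z.re + b = 0 ∧ (2 * a * z.im) ^ 2 = -discrim a b c := by
  have hre_im : (a : ℂ) * z ^ 2 + b * z + c = 0 ↔
      a * (z.re ^ 2 - z.im ^ 2) + b * z.re + c = 0 ∧ (2 * a * z.re + b) * z.im = 0 := by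
    rw [Complex.ext_iff]
    simp only [add_re, add_im, mul_re, mul_im, ofReal_re, ofReal_im, sq, zero_re, zero_im]
    exact and_congr (by constructor <;> intro h <;> linear_combination h)
      (by constructor <;> intro h <;> linear_combination h)
  rw [hre_im, mul_eq_zero, or_iff_left hz, and_comm, discrim]
  refine and_congr_right fun hvertex => ?_
  constructor
  · intro h
    linear_combination (-4 * a) * h + (2 * a * z.re + b) * hvertex
  · intro h
    refine (mul_eq_zero.mp ?_).resolve_left (mul_ne_zero four_ne_zero ha)
    linear_combination -h + (2 * a * z.re + b) * hvertex

theorem exists_im_ne_zero_quadratic_eq_zero_iff {a b c : ℝ} (ha : a ≠ 0) :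
    (∃ z : ℂ, z.im ≠ 0 ∧ (a : ℂ) * z ^ 2 + b * z + c = 0) ↔ discrim a b c < 0 := by
  constructor
  · rintro ⟨z, hz, hroot⟩
    have hsq := ((quadratic_eq_zero_iff_of_im_ne_zero ha hz).mp hroot).2
    have : 0 < (2 * a * z.im) ^ 2 := by positivity
    linarith
  · intro hd
    have h2a : 2 * a ≠ 0 := mul_ne_zero two_ne_zero ha
    set s := √(-discrim a b c)
    have hs : 0 < s := Real.sqrt_pos.mpr (neg_pos.mpr hd)
    have him : (⟨-b / (2 * a), s / (2 * a)⟩ : ℂ).im ≠ 0 := div_ne_zero hs.ne' h2a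
    refine ⟨_, him, (quadratic_eq_zero_iff_of_im_ne_zero ha him).mpr ⟨?_, ?_⟩⟩
    · field_simp
      ring
    · rw [mul_div_cancel₀ s h2a, Real.sq_sqrt (neg_pos.mpr hd).le]

theorem constant_shear_vortex_sheet_criterion_general (g k ε U₀ μ : ℝ)
    (hk : 0 < k) (hε : 0 < ε) :
    (∃ c : ℂ, c.im ≠ 0 ∧
        ((g * (1 - ε) : ℝ) : ℂ)
          = (ε : ℂ) * ((U₀ : ℂ) - c) ^ 2 * (k : ℂ) + (ε : ℂ) * (μ : ℂ) * ((U₀ : ℂ) - c)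
              + c ^ 2 * (k : ℂ)) ↔
      ε / (1 + ε) ^ 2 * (U₀ * (U₀ + μ / k))
        > ε ^ 2 / (1 + ε) ^ 2 * (μ ^ 2 / (4 * k ^ 2)) + g / k * ((1 - ε) / (1 + ε)) := by
  set A := k * (1 + ε)
  set B := -(ε * (2 * k * U₀ + μ))
  set C := ε * k * U₀ ^ 2 + ε * μ * U₀ - g * (1 - ε)
  have hA : 0 < A := by positivity
  have hdiscrim : discrim A B C = (2 * A) ^ 2 *
      (ε ^ 2 / (1 + ε) ^ 2 * (μ ^ 2 / (4 * k ^ 2)) + g / k * ((1 - ε) / (1 + ε))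
        - ε / (1 + ε) ^ 2 * (U₀ * (U₀ + μ / k))) := by
    simp only [A, B, C, discrim]
    field_simp
    ring
  calc _ ↔ ∃ c : ℂ, c.im ≠ 0 ∧ (A : ℂ) * c ^ 2 + B * c + C = 0 :=
        exists_congr fun c => and_congr_right fun _ => by
          simp only [A, B, C]
          push_cast
          constructor <;> intro h <;> linear_combination -h
    _ ↔ discrim A B C < 0 := exists_im_ne_zero_quadratic_eq_zero_iff hA.ne'
    _ ↔ _ := by
      rw [hdiscrim]
      exact (smul_neg_iff_of_pos_left (pow_pos (mul_pos two_pos hA) 2)).trans sub_neg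

/-- Instability criterion for a constant-shear wind with a vortex sheet (σ = 0, infinite
depths): the quadratic `g(1-ε) = ε(U₀-c)²k + εμ(U₀-c) + c²k` has a non-real root iff
`(ε/(1+ε)²)·U₀(U₀+μ/k) > (ε²/(1+ε)²)·μ²/(4k²) + (g/k)·(1-ε)/(1+ε)`. -/
theorem constant_shear_vortex_sheet_criterion (g k ε U₀ μ : ℝ)
    (hg : 0 < g) (hk : 0 < k) (hε : 0 < ε) (hε1 : ε ≤ 1) (hU₀ : 0 ≤ U₀) :
    (∃ c : ℂ, c.im ≠ 0 ∧
        ((g * (1 - ε) : ℝ) : ℂ)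
          = (ε : ℂ) * ((U₀ : ℂ) - c) ^ 2 * (k : ℂ) + (ε : ℂ) * (μ : ℂ) * ((U₀ : ℂ) - c)
              + c ^ 2 * (k : ℂ)) ↔
      ε / (1 + ε) ^ 2 * (U₀ * (U₀ + μ / k))
        > ε ^ 2 / (1 + ε) ^ 2 * (μ ^ 2 / (4 * k ^ 2)) + g / k * ((1 - ε) / (1 + ε)) :=
  constant_shear_vortex_sheet_criterion_general g k ε U₀ μ hk hε
end

section
/- Fix α ∈ (0,1), C₀ ≥ 1, and m > 0. There exists a constant C > 0 depending only on α, C₀, m such that for all c_I ∈ ℝ and all τ', τ'', τ''' ∈ ℝ with |τ'|, |τ''| ≤ C₀|τ'''|, one has ∫_{τ'}^{τ''} |log((c_I² + τ'''²)/(c_I² + τ²))|^m dτ ≤ C (c_I² + τ'''²)^{(1-α)/2} |τ' - τ''|^α. -/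
/-!
On the integration range `|τ| ≤ C₀ |τ'''|`, so with `A = c_I² + τ'''²` the ratio
`A / (c_I² + τ²)` lies between `C₀⁻²` and `A / τ²`. Hence `|log|` is at most
`max (log C₀²) (log (A / τ²))`, and `log x ≤ x ^ β / β` with `β = (1 - α) / (2m)` bounds the
`m`-th power by `B + K A^((1-α)/2) |τ|^(α-1)`. Over an interval of length `L` the function
`|τ|^(α-1)` integrates to at most `2 L^α / α`, while the constant contributes
`B L ≤ B (2 C₀)^(1-α) A^((1-α)/2) L^α` because `L ≤ 2 C₀ √A`.
-/

open intervalIntegral Real Set MeasureTheory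
open scoped Interval

lemma intervalIntegrable_abs_rpow {r : ℝ} (hr : -1 < r) (a b : ℝ) :
    IntervalIntegrable (fun x => |x| ^ r) volume a b := by
  have h_nonneg (c : ℝ) (hc : 0 ≤ c) : IntervalIntegrable (fun x => |x| ^ r) volume 0 c :=
    (intervalIntegrable_rpow' hr).congr fun x hx => by
      rw [uIoc_of_le hc] at hx
      simp only [abs_of_pos hx.1]
  have h_zero (c : ℝ) : IntervalIntegrable (fun x => |x| ^ r) volume 0 c := by
    rcases le_total 0 c with hc | hc
    · exact h_nonneg c hc
    · simpa using (IntervalIntegrable.iff_comp_neg (by simp)).1 (h_nonneg (-c) (by linarith))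
  exact (h_zero a).symm.trans (h_zero b)

lemma integral_abs_rpow_sub_one_le_of_nonneg {p a b : ℝ} (hp : 0 < p) (hp1 : p ≤ 1)
    (ha : 0 ≤ a) (hab : a ≤ b) :
    ∫ x in a..b, |x| ^ (p - 1) ≤ (b - a) ^ p / p := by
  have h_eq : ∫ x in a..b, |x| ^ (p - 1) = (b ^ p - a ^ p) / p := by
    rw [integral_congr (g := fun x => x ^ (p - 1)), integral_rpow (Or.inl (by linarith)),
      sub_add_cancel]
    intro x hx
    rw [uIcc_of_le hab] at hx
    simp only [abs_of_nonneg (ha.trans hx.1)]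
  have h_sub : b ^ p ≤ a ^ p + (b - a) ^ p := by
    simpa using rpow_add_le_add_rpow ha (sub_nonneg.2 hab) hp.le hp1
  rw [h_eq]
  gcongr
  linarith

lemma integral_abs_rpow_sub_one_le {p a b : ℝ} (hp : 0 < p) (hp1 : p ≤ 1) (hab : a ≤ b) :
    ∫ x in a..b, |x| ^ (p - 1) ≤ 2 * (b - a) ^ p / p := by
  have h_int := intervalIntegrable_abs_rpow (r := p - 1) (by linarith)
  have h_half : (b - a) ^ p / p ≤ 2 * (b - a) ^ p / p := by
    gcongr
    linarith [rpow_nonneg (sub_nonneg.2 hab) p]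
  have h_nonpos (c : ℝ) (hac : a ≤ c) (hc : c ≤ 0) :
      ∫ x in a..c, |x| ^ (p - 1) ≤ (c - a) ^ p / p := by
    have h_neg := integral_comp_neg (a := a) (b := c) fun x => |x| ^ (p - 1)
    simp only [abs_neg] at h_neg
    rw [h_neg, show c - a = -a - -c by ring]
    exact integral_abs_rpow_sub_one_le_of_nonneg hp hp1 (neg_nonneg.2 hc) (neg_le_neg hac)
  rcases le_total 0 a with ha | ha
  · exact (integral_abs_rpow_sub_one_le_of_nonneg hp hp1 ha hab).trans h_half
  rcases le_total b 0 with hb | hb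
  · exact (h_nonpos b hab hb).trans h_half
  calc ∫ x in a..b, |x| ^ (p - 1)
      = (∫ x in a..0, |x| ^ (p - 1)) + ∫ x in 0..b, |x| ^ (p - 1) :=
        (integral_add_adjacent_intervals (h_int a 0) (h_int 0 b)).symm
    _ ≤ (0 - a) ^ p / p + (b - 0) ^ p / p :=
        add_le_add (h_nonpos 0 ha le_rfl)
          (integral_abs_rpow_sub_one_le_of_nonneg hp hp1 le_rfl hb)
    _ ≤ 2 * (b - a) ^ p / p := by
        rw [two_mul, add_div]
        gcongr

lemma abs_integral_abs_rpow_sub_one_le {p : ℝ} (hp : 0 < p) (hp1 : p ≤ 1) (a b : ℝ) :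
    |∫ x in a..b, |x| ^ (p - 1)| ≤ 2 * |b - a| ^ p / p := by
  have h_nonneg (a b : ℝ) (hab : a ≤ b) : 0 ≤ ∫ x in a..b, |x| ^ (p - 1) :=
    integral_nonneg hab fun x _ => by positivity
  rcases le_total a b with hab | hab
  · rw [abs_of_nonneg (h_nonneg a b hab), abs_of_nonneg (sub_nonneg.2 hab)]
    exact integral_abs_rpow_sub_one_le hp hp1 hab
  · rw [integral_symm, abs_neg, abs_of_nonneg (h_nonneg b a hab), abs_sub_comm,
      abs_of_nonneg (sub_nonneg.2 hab)]
    exact integral_abs_rpow_sub_one_le hp hp1 hab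

lemma integral_le_of_norm_le_const_add_mul_abs_rpow {f : ℝ → ℝ} {a b B K p : ℝ} (hp : 0 < p)
    (hp1 : p ≤ 1) (hB : 0 ≤ B) (hK : 0 ≤ K)
    (hf : ∀ x ∈ Ι a b, x ≠ 0 → ‖f x‖ ≤ B + K * |x| ^ (p - 1)) :
    ∫ x in a..b, f x ≤ B * |b - a| + K * (2 * |b - a| ^ p / p) := by
  have h_int : IntervalIntegrable (fun x => |x| ^ (p - 1)) volume a b :=
    intervalIntegrable_abs_rpow (by linarith) a b
  have h_ae : ∀ᵐ x ∂volume.restrict (Ι a b), ‖f x‖ ≤ B + K * |x| ^ (p - 1) := by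
    have h_ne : ∀ᵐ x ∂volume.restrict (Ι a b), x ≠ 0 :=
      ae_restrict_of_ae (Measure.ae_ne volume 0)
    filter_upwards [ae_restrict_mem measurableSet_uIoc, h_ne] using hf
  calc ∫ x in a..b, f x ≤ |∫ x in a..b, (B + K * |x| ^ (p - 1))| :=
        (le_abs_self _).trans <| norm_integral_le_abs_of_norm_le (f := f) h_ae
          (intervalIntegrable_const.add (h_int.const_mul K))
    _ = |B * (b - a) + K * ∫ x in a..b, |x| ^ (p - 1)| := by
        rw [integral_add intervalIntegrable_const (h_int.const_mul K),
          intervalIntegral.integral_const, intervalIntegral.integral_const_mul, smul_eq_mul,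
          mul_comm]
    _ ≤ B * |b - a| + K * (2 * |b - a| ^ p / p) := by
        refine (abs_add_le _ _).trans ?_
        rw [abs_mul, abs_mul, abs_of_nonneg hB, abs_of_nonneg hK]
        gcongr
        exact abs_integral_abs_rpow_sub_one_le hp hp1 a b

lemma sq_rpow_div_two (x p : ℝ) : (x ^ 2) ^ (p / 2) = |x| ^ p := by
  rw [← sq_abs x, ← rpow_natCast, ← rpow_mul (abs_nonneg x), Nat.cast_ofNat,
    mul_div_cancel₀ _ two_ne_zero]

lemma abs_log_div_le_max_log {a d t k : ℝ} (ha : 0 < a) (ht : 0 < t) (htd : t ≤ d)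
    (hdk : d ≤ k * a) : |log (a / d)| ≤ max (log k) (log (a / t)) := by
  have hd : 0 < d := ht.trans_le htd
  have h_upper : log (a / d) ≤ log (a / t) :=
    log_le_log (by positivity) (div_le_div_of_nonneg_left ha.le ht htd)
  have h_lower : -log (a / d) ≤ log k := by
    rw [← log_inv, inv_div]
    exact log_le_log (by positivity) ((div_le_iff₀ ha).2 hdk)
  rw [abs_le]
  exact ⟨by linarith [le_max_left (log k) (log (a / t))],
    h_upper.trans (le_max_right _ _)⟩

lemma rpow_le_rpow_add_rpow_of_le_max {u x y m : ℝ} (hu : 0 ≤ u) (hx : 0 ≤ x) (hy : 0 ≤ y)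
    (hm : 0 ≤ m) (h : u ≤ max x y) : u ^ m ≤ x ^ m + y ^ m := by
  rcases le_total x y with hxy | hxy
  · rw [max_eq_right hxy] at h
    linarith [rpow_le_rpow hu h hm, rpow_nonneg hx m]
  · rw [max_eq_left hxy] at h
    linarith [rpow_le_rpow hu h hm, rpow_nonneg hy m]

lemma abs_log_div_rpow_le {a d t k m β : ℝ} (hk : 1 ≤ k) (ha : 0 < a) (ht : 0 < t)
    (htd : t ≤ d) (hdk : d ≤ k * a) (hm : 0 < m) (hβ : 0 < β) :
    |log (a / d)| ^ m ≤ log k ^ m + β⁻¹ ^ m * (a / t) ^ (β * m) := by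
  have h_log : log (a / t) ≤ (a / t) ^ β / β := log_le_rpow_div (by positivity) hβ
  have h_max := (abs_log_div_le_max_log ha ht htd hdk).trans (max_le_max_left _ h_log)
  calc |log (a / d)| ^ m ≤ log k ^ m + ((a / t) ^ β / β) ^ m :=
        rpow_le_rpow_add_rpow_of_le_max (abs_nonneg _) (log_nonneg hk) (by positivity) hm.le h_max
    _ = log k ^ m + β⁻¹ ^ m * (a / t) ^ (β * m) := by
        rw [div_eq_inv_mul, mul_rpow (by positivity) (by positivity), ← rpow_mul (by positivity),
          mul_comm β]

lemma abs_log_rpow_le_of_abs_le {α C₀ m c τ₀ τ : ℝ} (hα1 : α < 1) (hC₀ : 1 ≤ C₀) (hm : 0 < m)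
    (hτ : τ ≠ 0) (hτ₀ : |τ| ≤ C₀ * |τ₀|) :
    |log ((c ^ 2 + τ₀ ^ 2) / (c ^ 2 + τ ^ 2))| ^ m ≤
      log (C₀ ^ 2) ^ m +
        ((1 - α) / (2 * m))⁻¹ ^ m * (c ^ 2 + τ₀ ^ 2) ^ ((1 - α) / 2) * |τ| ^ (α - 1) := by
  have hτ₀0 : τ₀ ≠ 0 := by
    rintro rfl
    simp_all
  have h_sq : τ ^ 2 ≤ C₀ ^ 2 * τ₀ ^ 2 := by
    rw [← sq_abs τ, ← sq_abs τ₀, ← mul_pow]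
    exact pow_le_pow_left₀ (abs_nonneg τ) hτ₀ 2
  have h_bound := abs_log_div_rpow_le (a := c ^ 2 + τ₀ ^ 2) (d := c ^ 2 + τ ^ 2) (t := τ ^ 2)
    (one_le_pow₀ hC₀) (by positivity) (by positivity) (by nlinarith [sq_nonneg c])
    (by nlinarith [sq_nonneg c, one_le_pow₀ (n := 2) hC₀]) hm (show 0 < (1 - α) / (2 * m) by bound)
  have h_exp : (1 - α) / (2 * m) * m = (1 - α) / 2 := by field_simp
  refine h_bound.trans_eq ?_
  rw [h_exp, div_rpow (by positivity) (by positivity), sq_rpow_div_two, div_eq_mul_inv (_ ^ _),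
    ← rpow_neg (abs_nonneg τ), neg_sub, mul_assoc]

lemma abs_le_max_abs_abs_of_mem_uIoc {a b x : ℝ} (hx : x ∈ Ι a b) : |x| ≤ max |a| |b| := by
  rcases mem_uIcc.1 (uIoc_subset_uIcc hx) with ⟨hax, hxb⟩ | ⟨hbx, hxa⟩
  · exact abs_le_max_abs_abs hax hxb
  · exact (abs_le_max_abs_abs hbx hxa).trans_eq (max_comm _ _)

lemma abs_sub_rpow_le_of_abs_le {a b c d C₀ q : ℝ} (hC₀ : 0 ≤ C₀) (hq : 0 ≤ q)
    (ha : |a| ≤ C₀ * |c|) (hb : |b| ≤ C₀ * |c|) :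
    |a - b| ^ q ≤ (2 * C₀) ^ q * (d ^ 2 + c ^ 2) ^ (q / 2) :=
  calc |a - b| ^ q ≤ (2 * C₀ * |c|) ^ q := by
        gcongr
        linarith [abs_sub a b]
    _ = (2 * C₀) ^ q * (c ^ 2) ^ (q / 2) := by
        rw [mul_rpow (by positivity) (abs_nonneg _), sq_rpow_div_two]
    _ ≤ (2 * C₀) ^ q * (d ^ 2 + c ^ 2) ^ (q / 2) := by
        gcongr
        exact le_add_of_nonneg_left (sq_nonneg d)

/-- The key integral inequality near a critical layer: for `|τ'|, |τ''| ≤ C₀|τ'''|`,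
`∫_{τ'}^{τ''} |log((c_I²+τ'''²)/(c_I²+τ²))|^m dτ ≤ C (c_I²+τ'''²)^{(1-α)/2} |τ'-τ''|^α`,
with `C` depending only on `α ∈ (0,1)`, `C₀ ≥ 1` and `m > 0`. -/
theorem log_integral_holder_bound (α C₀ m : ℝ)
    (hα : α ∈ Set.Ioo (0 : ℝ) 1) (hC₀ : 1 ≤ C₀) (hm : 0 < m) :
    ∃ C > 0, ∀ (cI τ' τ'' τ''' : ℝ), |τ'| ≤ C₀ * |τ'''| → |τ''| ≤ C₀ * |τ'''| →
      (∫ τ in τ'..τ'', |Real.log ((cI ^ 2 + τ''' ^ 2) / (cI ^ 2 + τ ^ 2))| ^ m)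
        ≤ C * (cI ^ 2 + τ''' ^ 2) ^ ((1 - α) / 2) * |τ' - τ''| ^ α := by
  obtain ⟨hα0, hα1⟩ := hα
  set B := log (C₀ ^ 2) ^ m
  set K := ((1 - α) / (2 * m))⁻¹ ^ m
  have hB : 0 ≤ B := rpow_nonneg (log_nonneg (one_le_pow₀ hC₀)) m
  have hK : 0 < K := rpow_pos_of_pos (by bound) m
  refine ⟨B * (2 * C₀) ^ (1 - α) + 2 * K / α, by positivity, ?_⟩
  intro cI τ' τ'' τ''' h' h''
  set A := cI ^ 2 + τ''' ^ 2
  set L := |τ' - τ''|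
  have h_integral := integral_le_of_norm_le_const_add_mul_abs_rpow
    (f := fun τ => |log (A / (cI ^ 2 + τ ^ 2))| ^ m) (a := τ') (b := τ'')
    (K := K * A ^ ((1 - α) / 2))
    hα0 hα1.le hB (by positivity) fun τ hτ hτ0 => by
      rw [norm_of_nonneg (by positivity)]
      exact abs_log_rpow_le_of_abs_le hα1 hC₀ hm hτ0
        ((abs_le_max_abs_abs_of_mem_uIoc hτ).trans (max_le h' h''))
  have hL : L ^ (1 - α) ≤ (2 * C₀) ^ (1 - α) * A ^ ((1 - α) / 2) :=
    abs_sub_rpow_le_of_abs_le (by linarith) (by linarith) h' h''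
  rw [abs_sub_comm] at h_integral
  calc _ ≤ B * L + K * A ^ ((1 - α) / 2) * (2 * L ^ α / α) := h_integral
    _ = B * L ^ (1 - α) * L ^ α + 2 * K / α * A ^ ((1 - α) / 2) * L ^ α := by
        rw [mul_assoc B, ← rpow_add' (abs_nonneg _) (by norm_num), sub_add_cancel, rpow_one]
        ring
    _ ≤ B * ((2 * C₀) ^ (1 - α) * A ^ ((1 - α) / 2)) * L ^ α
          + 2 * K / α * A ^ ((1 - α) / 2) * L ^ α := by gcongr
    _ = (B * (2 * C₀) ^ (1 - α) + 2 * K / α) * A ^ ((1 - α) / 2) * L ^ α := by ring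
end

section
/- Let g, k > 0. Suppose μ > 0 and x₂* > 0 are such that β := μx₂*[1 - (1 - e^{-2kx₂*})/(2kx₂*)] equals √(g/k). Define α := μx₂* - (μ/(2k))(1 + e^{-2kx₂*}) and f(c,ε) := (c - √(g/k))(c² - (εμ/k)c - (g/k)(1-ε)) + εc²(c - α). Then f(√(g/k), 0) = 0, ∂_c f(√(g/k), 0) = 0, ∂_c² f(√(g/k), 0) = 4√(g/k) > 0, and ∂_ε f(√(g/k), 0) = (gμ/k²)e^{-2kx₂*} > 0. -/
/-!
Write `c₀ = √(g/k)`. Since `c₀² = g/k`, at `ε = 0` the polynomial factors as `(c - c₀)² (c + c₀)`,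
which gives the double root and `∂²_c f = 4 c₀`. At `c = c₀` the first product vanishes, so `f` is
linear in `ε` with slope `c₀² (c₀ - α)`, and `c₀ = β` makes `β - α = (μ/k) e^{-2k x₂*}`.
-/

open Real

section DoubleRoot

variable {𝕜 : Type*} [NontriviallyNormedField 𝕜]

theorem hasDerivAt_sub_sq_mul_add (s c : 𝕜) :
    HasDerivAt (fun c => (c - s) ^ 2 * (c + s)) ((c - s) * (3 * c + s)) c := by
  have h := (((hasDerivAt_id' c).sub_const s).fun_pow 2).fun_mul ((hasDerivAt_id' c).add_const s)
  exact h.congr_deriv (by push_cast; ring)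

theorem deriv_sub_sq_mul_add (s : 𝕜) :
    deriv (fun c : 𝕜 => (c - s) ^ 2 * (c + s)) = fun c => (c - s) * (3 * c + s) :=
  funext fun c => (hasDerivAt_sub_sq_mul_add s c).deriv

theorem deriv_deriv_sub_sq_mul_add_self (s : 𝕜) :
    deriv (deriv fun c : 𝕜 => (c - s) ^ 2 * (c + s)) s = 4 * s := by
  have h := ((hasDerivAt_id' s).sub_const s).fun_mul (((hasDerivAt_id' s).const_mul 3).add_const s)
  rw [deriv_sub_sq_mul_add, h.deriv]
  ring

end DoubleRoot

theorem beta_sub_alpha {k x : ℝ} (hk : k ≠ 0) (hx : x ≠ 0) (μ E : ℝ) :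
    μ * x * (1 - (1 - E) / (2 * k * x)) - (μ * x - μ / (2 * k) * (1 + E)) = μ / k * E := by
  field_simp
  ring

/-- Degeneracy structure of the dispersion-relation polynomial for the piecewise-linear
wind profile: `c = √(g/k)` is a double root of `f(·,0)` with `∂²_c f = 4√(g/k) > 0` and
`∂_ε f = (gμ/k²)e^{-2kx₂*} > 0`. -/
theorem piecewise_linear_dispersion_double_root (g k μ x₂s : ℝ)
    (hg : 0 < g) (hk : 0 < k) (hμ : 0 < μ) (hx : 0 < x₂s)
    (hβ : μ * x₂s * (1 - (1 - Real.exp (-2 * k * x₂s)) / (2 * k * x₂s)) = Real.sqrt (g / k))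
    (α : ℝ) (hα : α = μ * x₂s - μ / (2 * k) * (1 + Real.exp (-2 * k * x₂s)))
    (f : ℝ → ℝ → ℝ)
    (hf : ∀ c ε, f c ε = (c - Real.sqrt (g / k))
        * (c ^ 2 - ε * μ / k * c - g / k * (1 - ε)) + ε * c ^ 2 * (c - α)) :
    f (Real.sqrt (g / k)) 0 = 0 ∧
    deriv (fun c => f c 0) (Real.sqrt (g / k)) = 0 ∧
    deriv (deriv (fun c => f c 0)) (Real.sqrt (g / k)) = 4 * Real.sqrt (g / k) ∧
    0 < 4 * Real.sqrt (g / k) ∧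
    deriv (fun ε => f (Real.sqrt (g / k)) ε) 0 = g * μ / k ^ 2 * Real.exp (-2 * k * x₂s) ∧
    0 < g * μ / k ^ 2 * Real.exp (-2 * k * x₂s) := by
  set s := √(g / k)
  have hs2 : s ^ 2 = g / k := sq_sqrt (div_pos hg hk).le
  have hf_still_air : (fun c => f c 0) = fun c => (c - s) ^ 2 * (c + s) := by
    funext c
    rw [hf, ← hs2]
    ring
  have hf_at_root : (fun ε => f s ε) = fun ε => s ^ 2 * (s - α) * ε := by
    funext ε
    rw [hf]
    ring
  have hcoeff : s ^ 2 * (s - α) = g * μ / k ^ 2 * exp (-2 * k * x₂s) := by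
    rw [hs2, ← hβ, hα, beta_sub_alpha hk.ne' hx.ne']
    ring
  refine ⟨by rw [hf]; ring, ?_, ?_, by positivity, ?_, by positivity⟩
  · simp [hf_still_air, deriv_sub_sq_mul_add]
  · rw [hf_still_air, deriv_deriv_sub_sq_mul_add_self]
  · simp [hf_at_root, hcoeff]
end

section
/- Let g, k, μ, x₂* > 0 with β := μx₂*[1 - (1-e^{-2kx₂*})/(2kx₂*)] = √(g/k), and set α := μx₂* - (μ/(2k))(1+e^{-2kx₂*}), f(c,ε) := (c - √(g/k))(c² - (εμ/k)c - (g/k)(1-ε)) + εc²(c-α). Then there exist ε₀ > 0 and C > 0 such that for all ε ∈ (0, ε₀), the cubic f(·,ε) has a root c ∈ ℂ with Im c > 0 and |c - √(g/k)| ≤ C√ε. -/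
open Filter Topology Set

/-!
Put `c₀ = √(g/k)` and `c = c₀ + w`. The hypothesis on `β` says exactly that
`c₀ - α = (μ/k) e^{-2kx₂*} > 0`, and the dispersion relation becomes the cubic
`(1 + ε) w³ + (2c₀ + εB) w² + εD w + εA = 0` with explicit real `B`, `D` and
`A = c₀²(c₀ - α) > 0`.
For small `ε` it has a real root `ρ ∈ [-3c₀, -c₀]` (intermediate value theorem). Dividing it out
leaves a quadratic whose middle coefficient is `O(ε)` (it equals `-ε(A + Dρ)/ρ²`) while its constant
coefficient `εA/(-ρ)` is of exact order `ε`; so its discriminant is negative and its roots `w, w̄`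
satisfy `(1 + ε)|w|² = εA/(-ρ) ≤ εA/c₀`, i.e. `|w| = O(√ε)`.
-/

theorem cubic_eq_mul_quadratic {R : Type*} [CommRing R] {a b c d ρ : R}
    (hρ : a * ρ ^ 3 + b * ρ ^ 2 + c * ρ + d = 0) (z : R) :
    a * z ^ 3 + b * z ^ 2 + c * z + d
      = (z - ρ) * (a * z ^ 2 + (a * ρ + b) * z + (a * ρ ^ 2 + b * ρ + c)) := by
  linear_combination hρ

theorem exists_quadratic_root_im_pos {a b c : ℝ} (ha : 0 < a) (h : b ^ 2 < 4 * a * c) :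
    ∃ z : ℂ, a * z ^ 2 + b * z + c = 0 ∧ 0 < z.im ∧ a * ‖z‖ ^ 2 = c := by
  obtain ⟨s, hs, hs2⟩ : ∃ s : ℝ, 0 < s ∧ s ^ 2 = 4 * a * c - b ^ 2 :=
    ⟨√(4 * a * c - b ^ 2), Real.sqrt_pos.2 (by linarith), Real.sq_sqrt (by linarith)⟩
  refine ⟨⟨-b / (2 * a), s / (2 * a)⟩, ?_, by simp only; positivity, ?_⟩
  · apply Complex.ext
    · simp only [sq, Complex.add_re, Complex.mul_re, Complex.ofReal_re, Complex.ofReal_im,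
        Complex.mul_im, zero_mul, sub_zero, Complex.zero_re]
      field_simp
      linear_combination -hs2
    · simp only [sq, Complex.add_im, Complex.mul_im, Complex.ofReal_re, Complex.ofReal_im,
        Complex.mul_re, zero_mul, add_zero, Complex.zero_im]
      field_simp
      ring
  · rw [Complex.sq_norm, Complex.normSq_mk]
    field_simp
    linear_combination hs2

theorem exists_cubic_root_im_pos {a b c d ρ : ℝ} (ha : 0 < a)
    (hρ : a * ρ ^ 3 + b * ρ ^ 2 + c * ρ + d = 0)
    (hdisc : (a * ρ + b) ^ 2 < 4 * a * (a * ρ ^ 2 + b * ρ + c)) :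
    ∃ z : ℂ, a * z ^ 3 + b * z ^ 2 + c * z + d = 0 ∧ 0 < z.im ∧
      a * ‖z‖ ^ 2 = a * ρ ^ 2 + b * ρ + c := by
  obtain ⟨z, hz, him, hnorm⟩ := exists_quadratic_root_im_pos ha hdisc
  refine ⟨z, ?_, him, hnorm⟩
  have hρ' : (a : ℂ) * ρ ^ 3 + b * ρ ^ 2 + c * ρ + d = 0 := by exact_mod_cast hρ
  rw [cubic_eq_mul_quadratic hρ' z]
  push_cast at hz
  rw [hz, mul_zero]

section ShiftedCubic

variable {c₀ A B D : ℝ}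

theorem eventually_exists_real_root (hc₀ : 0 < c₀) :
    ∀ᶠ ε in 𝓝 0, ∃ ρ ∈ Icc (-3 * c₀) (-c₀),
      (1 + ε) * ρ ^ 3 + (2 * c₀ + ε * B) * ρ ^ 2 + ε * D * ρ + ε * A = 0 := by
  set F : ℝ → ℝ → ℝ := fun ε ρ ↦ (1 + ε) * ρ ^ 3 + (2 * c₀ + ε * B) * ρ ^ 2 + ε * D * ρ + ε * A
  have hleft : ∀ᶠ ε in 𝓝 0, F ε (-3 * c₀) < 0 := by
    have : Continuous fun ε ↦ F ε (-3 * c₀) := by fun_prop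
    refine this.tendsto 0 |>.eventually_lt_const ?_
    simp only [F]
    nlinarith [pow_pos hc₀ 3]
  have hright : ∀ᶠ ε in 𝓝 0, 0 < F ε (-c₀) := by
    have : Continuous fun ε ↦ F ε (-c₀) := by fun_prop
    refine this.tendsto 0 |>.eventually_const_lt ?_
    simp only [F]
    nlinarith [pow_pos hc₀ 3]
  filter_upwards [hleft, hright] with ε hl hr
  have hcont : Continuous (F ε) := by fun_prop
  exact intermediate_value_Icc (by linarith) hcont.continuousOn ⟨hl.le, hr.le⟩

theorem exists_root_im_pos_of_real_root {ε ρ : ℝ} (hc₀ : 0 < c₀) (hA : 0 < A) (hε : 0 < ε)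
    (hsmall : ε * (A + 3 * c₀ * |D|) ^ 2 < 4 / 3 * A * c₀ ^ 3)
    (hρ : ρ ∈ Icc (-3 * c₀) (-c₀))
    (hroot : (1 + ε) * ρ ^ 3 + (2 * c₀ + ε * B) * ρ ^ 2 + ε * D * ρ + ε * A = 0) :
    ∃ w : ℂ, (1 + ε) * w ^ 3 + (2 * c₀ + ε * B) * w ^ 2 + ε * D * w + ε * A = 0 ∧
      0 < w.im ∧ ‖w‖ ^ 2 ≤ ε * A / c₀ := by
  obtain ⟨hρ_ge, hρ_le⟩ := hρ
  set γ := (1 + ε) * ρ ^ 2 + (2 * c₀ + ε * B) * ρ + ε * D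
  set β := (1 + ε) * ρ + (2 * c₀ + ε * B)
  have hγρ : γ * -ρ = ε * A := by linear_combination -hroot
  have hβρ : β * ρ ^ 2 = -ε * (A + D * ρ) := by linear_combination hroot
  have hγ_pos : 0 < γ := by nlinarith [mul_pos hε hA]
  have hγ_le : γ ≤ ε * A / c₀ := by
    rw [le_div_iff₀ hc₀, ← hγρ]; exact mul_le_mul_of_nonneg_left (by linarith) hγ_pos.le
  have hγ_ge : ε * A / (3 * c₀) ≤ γ := by
    rw [div_le_iff₀ (by positivity), ← hγρ]; exact mul_le_mul_of_nonneg_left (by linarith) hγ_pos.le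
  have hAD : |A + D * ρ| ≤ A + 3 * c₀ * |D| := by
    have hρ_abs : |ρ| ≤ 3 * c₀ := abs_le.2 ⟨by linarith, by linarith⟩
    calc |A + D * ρ| ≤ |A| + |D| * |ρ| := by rw [← abs_mul]; exact abs_add_le _ _
      _ ≤ A + 3 * c₀ * |D| := by
        rw [abs_of_pos hA]; nlinarith [mul_le_mul_of_nonneg_left hρ_abs (abs_nonneg D)]
  have hβ_sq : β ^ 2 * (c₀ ^ 2) ^ 2 ≤ ε ^ 2 * (A + 3 * c₀ * |D|) ^ 2 := by
    have hρ_sq : c₀ ^ 2 ≤ ρ ^ 2 := by nlinarith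
    calc β ^ 2 * (c₀ ^ 2) ^ 2 ≤ β ^ 2 * (ρ ^ 2) ^ 2 := by gcongr
      _ = ε ^ 2 * |A + D * ρ| ^ 2 := by
        rw [sq_abs]; linear_combination (β * ρ ^ 2 - ε * (A + D * ρ)) * hβρ
      _ ≤ ε ^ 2 * (A + 3 * c₀ * |D|) ^ 2 := by gcongr
  have hdisc : β ^ 2 < 4 * (1 + ε) * γ := by
    have hβ_lt : β ^ 2 * (c₀ ^ 2) ^ 2 < 4 * γ * (c₀ ^ 2) ^ 2 :=
      calc β ^ 2 * (c₀ ^ 2) ^ 2 ≤ ε * (ε * (A + 3 * c₀ * |D|) ^ 2) := by linear_combination hβ_sq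
        _ < ε * (4 / 3 * A * c₀ ^ 3) := by gcongr
        _ = 4 * (ε * A / (3 * c₀)) * (c₀ ^ 2) ^ 2 := by field_simp
        _ ≤ 4 * γ * (c₀ ^ 2) ^ 2 := by gcongr
    nlinarith [lt_of_mul_lt_mul_right hβ_lt (by positivity)]
  obtain ⟨w, hw, him, hnorm⟩ := exists_cubic_root_im_pos (by linarith) hroot hdisc
  refine ⟨w, by push_cast at hw; exact hw, him, ?_⟩
  nlinarith [sq_nonneg ‖w‖]

theorem eventually_exists_root_im_pos (hc₀ : 0 < c₀) (hA : 0 < A) :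
    ∀ᶠ ε : ℝ in 𝓝[>] 0, ∃ w : ℂ,
      (1 + ε) * w ^ 3 + (2 * c₀ + ε * B) * w ^ 2 + ε * D * w + ε * A = 0 ∧
      0 < w.im ∧ ‖w‖ ^ 2 ≤ ε * A / c₀ := by
  have hsmall : ∀ᶠ ε in 𝓝 0, ε * (A + 3 * c₀ * |D|) ^ 2 < 4 / 3 * A * c₀ ^ 3 := by
    have : Continuous fun ε : ℝ ↦ ε * (A + 3 * c₀ * |D|) ^ 2 := by fun_prop
    exact this.tendsto 0 |>.eventually_lt_const (by simp only [zero_mul]; positivity)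
  filter_upwards [self_mem_nhdsWithin, nhdsWithin_le_nhds hsmall,
    nhdsWithin_le_nhds (eventually_exists_real_root (B := B) (D := D) (A := A) hc₀)]
    with ε hε hε_small ⟨ρ, hρ, hroot⟩
  exact exists_root_im_pos_of_real_root hc₀ hA hε hε_small hρ hroot

end ShiftedCubic

/-- Existence of an unstable root: for the piecewise-linear wind profile dispersion
polynomial `f(c,ε)`, for all small `ε > 0` there is a root `c` with `Im c > 0` and
`|c - √(g/k)| ≤ C√ε`. -/
theorem piecewise_linear_unstable_root (g k μ x₂s : ℝ)
    (hg : 0 < g) (hk : 0 < k) (hμ : 0 < μ) (hx : 0 < x₂s)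
    (hβ : μ * x₂s * (1 - (1 - Real.exp (-2 * k * x₂s)) / (2 * k * x₂s)) = Real.sqrt (g / k))
    (α : ℝ) (hα : α = μ * x₂s - μ / (2 * k) * (1 + Real.exp (-2 * k * x₂s))) :
    ∃ ε₀ > 0, ∃ C > 0, ∀ ε : ℝ, ε ∈ Set.Ioo 0 ε₀ →
      ∃ c : ℂ,
        (c - (Real.sqrt (g / k) : ℝ))
            * (c ^ 2 - ((ε * μ / k : ℝ) : ℂ) * c - ((g / k * (1 - ε) : ℝ) : ℂ))
          + (ε : ℂ) * c ^ 2 * (c - (α : ℝ)) = 0 ∧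
        0 < c.im ∧
        ‖c - (Real.sqrt (g / k) : ℝ)‖ ≤ C * Real.sqrt ε := by
  set c₀ := √(g / k)
  have hc₀ : 0 < c₀ := Real.sqrt_pos.2 (div_pos hg hk)
  have hc₀_sq : (c₀ : ℂ) ^ 2 = (g : ℂ) / k := by exact_mod_cast Real.sq_sqrt (div_pos hg hk).le
  have hgap : 0 < c₀ - α := by
    have : c₀ - α = μ / k * Real.exp (-2 * k * x₂s) := by rw [← hβ, hα]; field_simp; ring
    rw [this]; positivity
  have hA : 0 < c₀ ^ 2 * (c₀ - α) := by positivity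
  obtain ⟨ε₀, hε₀, hsub⟩ := mem_nhdsGT_iff_exists_Ioo_subset.1 <|
    eventually_exists_root_im_pos (B := 3 * c₀ - α - μ / k)
      (D := 4 * c₀ ^ 2 - μ / k * c₀ - 2 * c₀ * α) hc₀ hA
  refine ⟨ε₀, hε₀, √(c₀ * (c₀ - α)), Real.sqrt_pos.2 (by positivity), fun ε hε ↦ ?_⟩
  obtain ⟨w, hw, him, hnorm⟩ := hsub hε
  refine ⟨c₀ + w, ?_, by simpa only [Complex.add_im, Complex.ofReal_im, zero_add] using him, ?_⟩
  · push_cast at hw ⊢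
    linear_combination hw + (w * (1 - ε)) * hc₀_sq
  · rw [add_sub_cancel_left, ← Real.sqrt_mul (by positivity)]
    refine Real.le_sqrt_of_sq_le (le_of_le_of_eq hnorm ?_)
    field_simp
end
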